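/- Let A, B, C be non-collinear points in the Euclidean plane with longest side of length a. If the 'death' value d(T) = min{ r : B_r(A) ∩ B_r(B) ∩ B_r(C) ≠ ∅ } is strictly greater than a/2, then d(T) equals the circumradius of triangle ABC. -/

import Mathlib

/-!
The circumcenter `O` is a centre of radius `R = dist O A`. Conversely, `d(T) > a/2` rules out the
midpoint of `BC` as a centre of radius `a/2`, which makes the angle at `A` acute; the angles at `B`
and `C` are not obtuse because `BC` is the longest side. Hence the barycentric coordinates of `O`
are nonnegative, and for any `x` the corresponding weighted sum of the `⟪x - O, P - O⟫` over the
vertices `P` vanishes. So `⟪x - O, P - O⟫ ≤ 0` for some vertex `P`, and then `dist x P ≥ R`.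
-/

open RealInnerProductSpace EuclideanGeometry

section

variable {E : Type*} [NormedAddCommGroup E] [InnerProductSpace ℝ E]

lemma dist_sq_eq_dist_sq_add_dist_sq_sub_two_mul_inner (P Q R : E) :
    dist P R ^ 2 = dist P Q ^ 2 + dist Q R ^ 2 - 2 * ⟪P - Q, R - Q⟫ := by
  rw [dist_eq_norm, dist_eq_norm, dist_eq_norm, ← sub_sub_sub_cancel_right P R Q,
    norm_sub_sq_real, norm_sub_rev Q R]
  ring

lemma inner_sub_sub_nonneg_of_dist_le {P Q R : E} (h : dist P R ≤ dist Q R) :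
    0 ≤ ⟪P - Q, R - Q⟫ := by
  have := dist_sq_eq_dist_sq_add_dist_sq_sub_two_mul_inner P Q R
  have : dist P R ^ 2 ≤ dist Q R ^ 2 := pow_le_pow_left₀ dist_nonneg h 2
  nlinarith [sq_nonneg (dist P Q)]

lemma two_mul_inner_sub_sub_eq_of_dist_eq {O A B : E} (h : dist O A = dist O B) :
    2 * ⟪O - A, B - A⟫ = ‖B - A‖ ^ 2 := by
  have := dist_sq_eq_dist_sq_add_dist_sq_sub_two_mul_inner O A B
  rw [← h, dist_comm A B, dist_eq_norm B A] at this
  linarith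

lemma inner_pos_of_half_dist_lt_dist_midpoint {A B C : E}
    (h : dist B C / 2 < dist A (midpoint ℝ B C)) : 0 < ⟪B - A, C - A⟫ := by
  have hApollonius := dist_sq_add_dist_sq_eq_two_mul_dist_midpoint_sq_add_half_dist_sq A B C
  have hcos := dist_sq_eq_dist_sq_add_dist_sq_sub_two_mul_inner B A C
  have : (dist B C / 2) ^ 2 < dist A (midpoint ℝ B C) ^ 2 := by gcongr
  rw [dist_comm B A] at hcos
  nlinarith

lemma inner_mul_inner_lt_of_not_collinear {A B C : E} (h : ¬ Collinear ℝ {A, B, C}) :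
    ⟪B - A, C - A⟫ * ⟪B - A, C - A⟫ < ⟪B - A, B - A⟫ * ⟪C - A, C - A⟫ := by
  rw [Set.insert_comm] at h
  have hsin := sin_pos_of_not_collinear h
  have hBA : 0 < ‖B - A‖ := norm_pos_iff.mpr (sub_ne_zero.mpr (ne₁₂_of_not_collinear h))
  have hCA : 0 < ‖C - A‖ := norm_pos_iff.mpr (sub_ne_zero.mpr (ne₂₃_of_not_collinear h).symm)
  have := InnerProductGeometry.sin_angle_mul_norm_mul_norm (B - A) (C - A)
  have hpos : 0 < √(⟪B - A, B - A⟫ * ⟪C - A, C - A⟫ - ⟪B - A, C - A⟫ * ⟪B - A, C - A⟫) := by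
    rw [← this]; exact mul_pos hsin (mul_pos hBA hCA)
  linarith [Real.sqrt_pos.mp hpos]

lemma exists_smul_add_smul_eq_sub_of_mem_affineSpan {A B C O : E}
    (hO : O ∈ affineSpan ℝ {A, B, C}) : ∃ s t : ℝ, s • (B - A) + t • (C - A) = O - A := by
  have hA : A ∈ ({A, B, C} : Set E) := Set.mem_insert A _
  have := vsub_mem_vectorSpan_of_mem_affineSpan_of_mem_affineSpan hO (mem_affineSpan ℝ hA)
  rw [vectorSpan_eq_span_vsub_set_right ℝ hA] at this
  simpa [Set.image_insert_eq, Submodule.span_insert_zero, Submodule.mem_span_pair] using this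

lemma mem_convexHull_of_dist_eq_of_inner_nonneg {A B C O : E}
    (hABC : ¬ Collinear ℝ {A, B, C}) (hO : O ∈ affineSpan ℝ {A, B, C})
    (hOB : dist O A = dist O B) (hOC : dist O A = dist O C)
    (hA : 0 ≤ ⟪B - A, C - A⟫) (hB : 0 ≤ ⟪A - B, C - B⟫) (hC : 0 ≤ ⟪A - C, B - C⟫) :
    O ∈ convexHull ℝ {A, B, C} := by
  obtain ⟨s, t, hst⟩ := exists_smul_add_smul_eq_sub_of_mem_affineSpan hO
  have hGram := inner_mul_inner_lt_of_not_collinear hABC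
  have hu := two_mul_inner_sub_sub_eq_of_dist_eq hOB
  have hv := two_mul_inner_sub_sub_eq_of_dist_eq hOC
  rw [← hst, ← real_inner_self_eq_norm_sq] at hu hv
  simp only [inner_add_left, real_inner_smul_left] at hu hv
  set p := ⟪B - A, B - A⟫
  set q := ⟪C - A, C - A⟫
  set e := ⟪B - A, C - A⟫
  rw [real_inner_comm] at hu
  -- Solving this Gram system: the barycentric weights of `O` are proportional to
  -- `|BC|² ⟪B - A, C - A⟫`, `|CA|² ⟪A - B, C - B⟫` and `|AB|² ⟪A - C, B - C⟫`.
  have hG : 0 < 2 * (p * q - e * e) := by linarith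
  have hsG : s * (2 * (p * q - e * e)) = q * ⟪A - B, C - B⟫ := by
    have : p - e = ⟪A - B, C - B⟫ := by
      simp only [p, e, inner_sub_left, inner_sub_right, real_inner_comm]; ring
    linear_combination q * hu - e * hv + q * this
  have htG : t * (2 * (p * q - e * e)) = p * ⟪A - C, B - C⟫ := by
    have : q - e = ⟪A - C, B - C⟫ := by
      simp only [q, e, inner_sub_left, inner_sub_right, real_inner_comm]; ring
    linear_combination p * hv - e * hu + p * this
  have hrG : (1 - s - t) * (2 * (p * q - e * e)) = e * ⟪B - C, B - C⟫ := by
    have : p + q - 2 * e = ⟪B - C, B - C⟫ := by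
      simp only [p, q, e, inner_sub_left, inner_sub_right, real_inner_comm]; ring
    linear_combination -(q * hu - e * hv) - (p * hv - e * hu) + e * this
  have hs : 0 ≤ s := nonneg_of_mul_nonneg_left (hsG ▸ mul_nonneg real_inner_self_nonneg hB) hG
  have ht : 0 ≤ t := nonneg_of_mul_nonneg_left (htG ▸ mul_nonneg real_inner_self_nonneg hC) hG
  have hr : 0 ≤ 1 - s - t :=
    nonneg_of_mul_nonneg_left (hrG ▸ mul_nonneg hA real_inner_self_nonneg) hG
  refine mem_convexHull_of_exists_fintype ![1 - s - t, s, t] ![A, B, C] ?_ ?_ ?_ ?_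
  · intro i; fin_cases i <;> assumption
  · simp only [Fin.sum_univ_three, Matrix.cons_val_zero, Matrix.cons_val_one, Matrix.cons_val]; ring
  · intro i; fin_cases i <;> simp
  · simp only [Fin.sum_univ_three, Matrix.cons_val_zero, Matrix.cons_val_one, Matrix.cons_val]
    linear_combination (norm := module) hst

lemma exists_le_dist_of_mem_convexHull {s : Set E} {O : E} {R : ℝ}
    (hO : O ∈ convexHull ℝ s) (hs : ∀ P ∈ s, dist P O = R) (x : E) :
    ∃ P ∈ s, R ≤ dist x P := by
  by_contra! hlt
  -- If every point of `s` were closer than `R` to `x`, all of `s`, hence `O`, would lie in the open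
  -- half-space `⟪x - O, O⟫ < ⟪x - O, ·⟫`.
  have hsub : s ⊆ {P | ⟪x - O, O⟫ < ⟪x - O, P⟫} := by
    intro P hP
    have := dist_sq_eq_dist_sq_add_dist_sq_sub_two_mul_inner x O P
    have hxP : dist x P ^ 2 < R ^ 2 := pow_lt_pow_left₀ (hlt P hP) dist_nonneg two_ne_zero
    rw [dist_comm O P, hs P hP, inner_sub_right] at this
    show ⟪x - O, O⟫ < ⟪x - O, P⟫
    nlinarith [sq_nonneg (dist x O)]
  have hconv : Convex ℝ {P | ⟪x - O, O⟫ < ⟪x - O, P⟫} :=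
    convex_halfSpace_gt (innerₛₗ ℝ (x - O)).isLinear _
  exact (lt_irrefl ⟪x - O, O⟫) (convexHull_min hsub hconv hO)

end

/-- For non-collinear `A, B, C` in the Euclidean plane with longest side `BC` of length `a`,
if the death value `d(T) = min { r : B_r(A) ∩ B_r(B) ∩ B_r(C) ≠ ∅ }` (closed balls) is strictly
greater than `a/2`, then `d(T)` equals the circumradius, the common distance from the
circumcenter `O` to the vertices. -/
theorem death_eq_circumradius (A B C O : EuclideanSpace ℝ (Fin 2))
    (hcol : ¬ Collinear ℝ ({A, B, C} : Set (EuclideanSpace ℝ (Fin 2))))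
    (h1 : dist A C ≤ dist B C) (h2 : dist A B ≤ dist A C)
    (hOB : dist O A = dist O B) (hOC : dist O A = dist O C)
    (hgt : dist B C / 2 <
      sInf {r : ℝ | ∃ x : EuclideanSpace ℝ (Fin 2),
        dist x A ≤ r ∧ dist x B ≤ r ∧ dist x C ≤ r}) :
    sInf {r : ℝ | ∃ x : EuclideanSpace ℝ (Fin 2),
        dist x A ≤ r ∧ dist x B ≤ r ∧ dist x C ≤ r} = dist O A := by
  set S := {r : ℝ | ∃ x : EuclideanSpace ℝ (Fin 2), dist x A ≤ r ∧ dist x B ≤ r ∧ dist x C ≤ r}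
  have hbdd : BddBelow S := ⟨0, fun r ⟨_, hxA, _⟩ ↦ dist_nonneg.trans hxA⟩
  have hRS : dist O A ∈ S := ⟨O, le_rfl, hOB.ge, hOC.ge⟩
  refine le_antisymm (csInf_le hbdd hRS) (le_csInf ⟨_, hRS⟩ ?_)
  have hM : dist B C / 2 < dist A (midpoint ℝ B C) := by
    by_contra! hM
    refine hgt.not_ge (csInf_le hbdd ⟨midpoint ℝ B C, ?_, ?_, ?_⟩)
    · rwa [dist_comm]
    · rw [dist_midpoint_left, Real.norm_two, inv_mul_eq_div]
    · rw [dist_midpoint_right, Real.norm_two, inv_mul_eq_div]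
  have hspan : affineSpan ℝ ({A, B, C} : Set (EuclideanSpace ℝ (Fin 2))) = ⊤ := by
    have hind := affineIndependent_iff_not_collinear_set.mpr hcol
    have := hind.affineSpan_eq_top_iff_card_eq_finrank_add_one.mpr (by simp)
    simpa only [Matrix.range_cons, Matrix.range_empty, Set.singleton_union,
      insert_empty_eq] using this
  have hO : O ∈ convexHull ℝ {A, B, C} :=
    mem_convexHull_of_dist_eq_of_inner_nonneg hcol (hspan ▸ AffineSubspace.mem_top _ _ _) hOB hOC
      (inner_pos_of_half_dist_lt_dist_midpoint hM).le (inner_sub_sub_nonneg_of_dist_le h1)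
      (inner_sub_sub_nonneg_of_dist_le (by rw [dist_comm C B]; exact h2.trans h1))
  rintro r ⟨x, hxA, hxB, hxC⟩
  obtain ⟨P, hP, hRP⟩ := exists_le_dist_of_mem_convexHull (R := dist O A) hO
    (by rintro P (rfl | rfl | rfl) <;> simp only [dist_comm _ O, ← hOB, ← hOC]) x
  rcases hP with rfl | rfl | rfl <;> linarith
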